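/- Let r > 0 and let u : B_r → ℝ^k be of class C² with ‖Du‖_{C⁰(B_r)} < ∞. Then for every q ∈ B_r and all indices 1 ≤ i, j ≤ m one has the pointwise estimate |∂_i∂_j u(q)| ≤ (1 + ‖Du‖_{C⁰(B_r)}²)^{3/2} ‖A(q)‖, where ‖A(q)‖ is the tensorial norm of the second fundamental form of the graph of u at q. -/

import Mathlib

/-!
Write `c = 1 + ‖Du(q)‖²` and `G = I + Du(q)ᵗ Du(q) = I + gram(∂_i u(q))`. Cauchy–Schwarz gives
`G ≤ c I`, so `c⁻¹ I ≤ G⁻¹` and `c⁻² I ≤ G⁻¹ ⊗ G⁻¹`; since `‖A‖²` pairs `G⁻¹ ⊗ G⁻¹` with the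
Gram matrix of the `A_ij`, the Schur product theorem yields `∑ |A_ij|² ≤ c² ‖A‖²`.
On the other hand the tangent part of `(0, ∂_i∂_j u)` is `(x, Du x)` for some `x`, so
`|A_ij|² = |x|² + |∂_i∂_j u - Du x|²`, and `|Du x| ≤ ‖Du‖ |x|` gives `|∂_i∂_j u|² ≤ c |A_ij|²`.
-/

open Metric

noncomputable section

/-- The identification `ℝ^m × ℝ^k ≅ ℝ^n`, `n = m + k`, realized as the Euclidean space
indexed by `Fin m ⊕ Fin k`. -/
def emb {m k : ℕ} (a : EuclideanSpace ℝ (Fin m)) (b : EuclideanSpace ℝ (Fin k)) :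
    EuclideanSpace ℝ (Fin m ⊕ Fin k) :=
  (WithLp.equiv 2 (Fin m ⊕ Fin k → ℝ)).symm
    (Sum.elim (WithLp.equiv 2 (Fin m → ℝ) a) (WithLp.equiv 2 (Fin k → ℝ) b))

/-- The tangent space `T_x` of the graph of `u` at `(x, u(x))`: the subspace of
`ℝ^n = ℝ^m × ℝ^k` spanned by the vectors `(e_i, ∂_i u(x))`, `i = 1, …, m`. -/
def tangentSpaceOfGraph {m k : ℕ}
    (u : EuclideanSpace ℝ (Fin m) → EuclideanSpace ℝ (Fin k))
    (x : EuclideanSpace ℝ (Fin m)) : Submodule ℝ (EuclideanSpace ℝ (Fin m ⊕ Fin k)) :=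
  Submodule.span ℝ (Set.range fun i : Fin m =>
    emb (EuclideanSpace.single i 1) (fderiv ℝ u x (EuclideanSpace.single i 1)))

/-- The second partial derivative `∂_i ∂_j u(q) ∈ ℝ^k`. -/
def secondPartial {m k : ℕ}
    (u : EuclideanSpace ℝ (Fin m) → EuclideanSpace ℝ (Fin k))
    (q : EuclideanSpace ℝ (Fin m)) (i j : Fin m) : EuclideanSpace ℝ (Fin k) :=
  fderiv ℝ (fderiv ℝ u) q (EuclideanSpace.single i 1) (EuclideanSpace.single j 1)

/-- The second fundamental form `A_{ij}(q) = π_q^⊥(0, ∂_i∂_j u(q)) ∈ ℝ^n` of the graph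
of `u` at `q`, where `π_q^⊥` is the orthogonal projection onto `T_q^⊥`. -/
def sff {m k : ℕ}
    (u : EuclideanSpace ℝ (Fin m) → EuclideanSpace ℝ (Fin k))
    (q : EuclideanSpace ℝ (Fin m)) (i j : Fin m) : EuclideanSpace ℝ (Fin m ⊕ Fin k) :=
  (Submodule.orthogonalProjectionOnto (tangentSpaceOfGraph u q)ᗮ (emb 0 (secondPartial u q i j)) :
    EuclideanSpace ℝ (Fin m ⊕ Fin k))

/-- The induced metric `G(q) = I_m + Du(q)ᵗ Du(q)`, with entries
`g_{ij}(q) = δ_{ij} + ⟨∂_i u(q), ∂_j u(q)⟩`. -/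
def inducedMetric {m k : ℕ}
    (u : EuclideanSpace ℝ (Fin m) → EuclideanSpace ℝ (Fin k))
    (q : EuclideanSpace ℝ (Fin m)) : Matrix (Fin m) (Fin m) ℝ :=
  Matrix.of fun i j => (if i = j then (1 : ℝ) else 0) +
    (inner ℝ (fderiv ℝ u q (EuclideanSpace.single i 1))
      (fderiv ℝ u q (EuclideanSpace.single j 1)) : ℝ)

/-- The squared tensorial norm `‖A(q)‖² = ∑ g^{ia} g^{jb} ⟨A_{ij}, A_{ab}⟩` of the second
fundamental form of the graph of `u` at `q`, where `(g^{ia}) = G(q)⁻¹`. -/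
def sffNormSq {m k : ℕ}
    (u : EuclideanSpace ℝ (Fin m) → EuclideanSpace ℝ (Fin k))
    (q : EuclideanSpace ℝ (Fin m)) : ℝ :=
  ∑ i, ∑ j, ∑ a, ∑ b,
    (inducedMetric u q)⁻¹ i a * (inducedMetric u q)⁻¹ j b *
      (inner ℝ (sff u q i j) (sff u q a b) : ℝ)

/-- The tensorial norm `‖A(q)‖` of the second fundamental form of the graph of `u` at `q`. -/
def sffNorm {m k : ℕ}
    (u : EuclideanSpace ℝ (Fin m) → EuclideanSpace ℝ (Fin k))
    (q : EuclideanSpace ℝ (Fin m)) : ℝ :=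
  Real.sqrt (sffNormSq u q)

/-- The Frobenius norm `‖Du(x)‖ = (∑ j ‖∂_j u(x)‖²)^{1/2}` of the Jacobian of `u` at `x`. -/
def frobDu {m k : ℕ}
    (u : EuclideanSpace ℝ (Fin m) → EuclideanSpace ℝ (Fin k))
    (x : EuclideanSpace ℝ (Fin m)) : ℝ :=
  Real.sqrt (∑ j, ‖fderiv ℝ u x (EuclideanSpace.single j 1)‖ ^ 2)

open Matrix
open scoped MatrixOrder Kronecker InnerProductSpace

section InnerProduct

variable {ι E : Type*} [Fintype ι] [NormedAddCommGroup E] [InnerProductSpace ℝ E]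

lemma norm_sum_smul_sq_le (x : ι → ℝ) (v : ι → E) :
    ‖∑ i, x i • v i‖ ^ 2 ≤ (∑ i, x i ^ 2) * ∑ i, ‖v i‖ ^ 2 := by
  have h : ‖∑ i, x i • v i‖ ≤ ∑ i, |x i| * ‖v i‖ :=
    (norm_sum_le _ _).trans_eq (by simp [norm_smul])
  calc ‖∑ i, x i • v i‖ ^ 2 ≤ (∑ i, |x i| * ‖v i‖) ^ 2 := by gcongr
    _ ≤ (∑ i, |x i| ^ 2) * ∑ i, ‖v i‖ ^ 2 := Finset.sum_mul_sq_le_sq_mul_sq _ _ _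
    _ = (∑ i, x i ^ 2) * ∑ i, ‖v i‖ ^ 2 := by simp only [sq_abs]

namespace Matrix

lemma PosSemidef.sum_mul_inner_nonneg {P : Matrix ι ι ℝ} (hP : P.PosSemidef) (v : ι → E) :
    0 ≤ ∑ s, ∑ t, P s t * ⟪v s, v t⟫_ℝ := by
  classical
  have h := (hP.hadamard (posSemidef_gram ℝ v)).dotProduct_mulVec_nonneg fun _ => 1
  simpa [dotProduct, mulVec] using h

lemma mul_sum_norm_sq_le_sum_mul_inner [DecidableEq ι] {P : Matrix ι ι ℝ} {c : ℝ}
    (h : c • 1 ≤ P) (v : ι → E) :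
    c * ∑ s, ‖v s‖ ^ 2 ≤ ∑ s, ∑ t, P s t * ⟪v s, v t⟫_ℝ := by
  have hnonneg := PosSemidef.sum_mul_inner_nonneg h v
  simp only [sub_apply, smul_apply, one_apply, smul_eq_mul, mul_ite, mul_one, mul_zero, sub_mul,
    Finset.sum_sub_distrib, ite_mul, zero_mul, Finset.sum_ite_eq, Finset.mem_univ, if_true,
    real_inner_self_eq_norm_sq] at hnonneg
  rw [Finset.mul_sum]
  linarith

variable [DecidableEq ι]

lemma sq_smul_one_le_kronecker_self {H : Matrix ι ι ℝ} {c : ℝ} (hc : 0 ≤ c) (h : c • 1 ≤ H) :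
    c ^ 2 • (1 : Matrix (ι × ι) (ι × ι) ℝ) ≤ H ⊗ₖ H := by
  obtain ⟨T, hT, rfl⟩ : ∃ T : Matrix ι ι ℝ, T.PosSemidef ∧ H = T + c • 1 :=
    ⟨H - c • 1, h, by abel⟩
  have hc1 : (c • 1 : Matrix ι ι ℝ).PosSemidef := PosSemidef.one.smul hc
  have hsq : c ^ 2 • (1 : Matrix (ι × ι) (ι × ι) ℝ) = (c • 1 : Matrix ι ι ℝ) ⊗ₖ (c • 1) := by
    rw [smul_kronecker, kronecker_smul, one_kronecker_one, smul_smul, sq]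
  rw [hsq, add_kronecker, kronecker_add, kronecker_add, ← add_assoc]
  exact le_add_of_nonneg_left <| add_nonneg
    (add_nonneg (hT.kronecker hT).nonneg (hT.kronecker hc1).nonneg) (hc1.kronecker hT).nonneg

lemma PosDef.inv_smul_one_le_inv {G : Matrix ι ι ℝ} (hG : G.PosDef) {c : ℝ}
    (h : G ≤ c • 1) : c⁻¹ • 1 ≤ G⁻¹ := by
  lift G to (Matrix ι ι ℝ)ˣ using hG.isUnit
  rw [← Algebra.algebraMap_eq_smul_one] at h ⊢
  have hsa : IsSelfAdjoint (G : Matrix ι ι ℝ) := hG.isHermitian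
  rw [le_algebraMap_iff_spectrum_le] at h
  have hpos : ∀ x ∈ spectrum ℝ (G : Matrix ι ι ℝ), 0 < x := fun x hx =>
    hG.isStrictlyPositive.spectrum_pos hx
  rw [nonsing_inv_eq_ringInverse, Ring.inverse_unit, ← cfc_inv_id (R := ℝ) G,
    algebraMap_le_cfc_iff _ _ _ (continuousOn_inv₀.mono fun x hx => (hpos x hx).ne') hsa]
  exact fun x hx => inv_anti₀ (hpos x hx) (h x hx)

lemma gram_le_sum_norm_sq_smul_one (v : ι → E) : gram ℝ v ≤ (∑ i, ‖v i‖ ^ 2) • 1 := by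
  rw [le_iff]
  refine PosSemidef.of_dotProduct_mulVec_nonneg
    ((isHermitian_one.smul (.all _)).sub (isHermitian_gram ℝ v)) fun x => ?_
  have hg := star_dotProduct_gram_mulVec (𝕜 := ℝ) v x x
  simp only [sub_mulVec, dotProduct_sub, smul_mulVec, one_mulVec, dotProduct_smul] at hg ⊢
  rw [hg, real_inner_self_eq_norm_sq, sub_nonneg]
  simpa [dotProduct, ← sq, mul_comm] using norm_sum_smul_sq_le x v

end Matrix

end InnerProduct

section Graph

variable {m k : ℕ}

def embₗ : (EuclideanSpace ℝ (Fin m) × EuclideanSpace ℝ (Fin k)) →ₗ[ℝ]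
    EuclideanSpace ℝ (Fin m ⊕ Fin k) where
  toFun p := emb p.1 p.2
  map_add' _ _ := by ext (_ | _) <;> rfl
  map_smul' _ _ := by ext (_ | _) <;> rfl

lemma emb_sub (a c : EuclideanSpace ℝ (Fin m)) (b d : EuclideanSpace ℝ (Fin k)) :
    emb a b - emb c d = emb (a - c) (b - d) :=
  (map_sub (embₗ (m := m) (k := k)) (a, b) (c, d)).symm

lemma norm_emb_sq (a : EuclideanSpace ℝ (Fin m)) (b : EuclideanSpace ℝ (Fin k)) :
    ‖emb a b‖ ^ 2 = ‖a‖ ^ 2 + ‖b‖ ^ 2 := by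
  simp only [EuclideanSpace.real_norm_sq_eq, Fintype.sum_sum_type]
  rfl

variable (u : EuclideanSpace ℝ (Fin m) → EuclideanSpace ℝ (Fin k)) (q : EuclideanSpace ℝ (Fin m))

lemma exists_eq_emb_of_mem_tangentSpaceOfGraph {z : EuclideanSpace ℝ (Fin m ⊕ Fin k)}
    (hz : z ∈ tangentSpaceOfGraph u q) : ∃ x, z = emb x (fderiv ℝ u q x) := by
  obtain ⟨a, rfl⟩ := (Submodule.mem_span_range_iff_exists_fun ℝ).mp hz
  refine ⟨∑ i, a i • EuclideanSpace.single i 1, ?_⟩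
  have hpair : (∑ i, a i • EuclideanSpace.single i 1,
      fderiv ℝ u q (∑ i, a i • EuclideanSpace.single i 1)) =
      ∑ i, a i • (EuclideanSpace.single i (1 : ℝ), fderiv ℝ u q (EuclideanSpace.single i 1)) := by
    simp [Prod.ext_iff, Prod.fst_sum, Prod.snd_sum]
  calc ∑ i, a i • emb (EuclideanSpace.single i 1) (fderiv ℝ u q (EuclideanSpace.single i 1))
      = embₗ (∑ i, a i • (EuclideanSpace.single i (1 : ℝ),
          fderiv ℝ u q (EuclideanSpace.single i 1))) := by
        simp only [map_sum, map_smul]; rfl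
    _ = _ := by rw [← hpair]; rfl

lemma norm_fderiv_apply_le_frobDu (x : EuclideanSpace ℝ (Fin m)) :
    ‖fderiv ℝ u q x‖ ≤ frobDu u q * ‖x‖ := by
  have hx : ∑ i, x i • EuclideanSpace.single i (1 : ℝ) = x := by
    simpa using (EuclideanSpace.basisFun (Fin m) ℝ).toBasis.sum_repr x
  have h := norm_sum_smul_sq_le (fun i => x i) fun i => fderiv ℝ u q (EuclideanSpace.single i 1)
  simp only [← map_smul, ← map_sum, hx, ← EuclideanSpace.real_norm_sq_eq] at h
  rw [frobDu, ← Real.sqrt_sq (norm_nonneg x), ← Real.sqrt_mul (by positivity), mul_comm]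
  exact Real.le_sqrt_of_sq_le h

end Graph

section SecondFundamentalForm

variable {m k : ℕ} (u : EuclideanSpace ℝ (Fin m) → EuclideanSpace ℝ (Fin k))
  (q : EuclideanSpace ℝ (Fin m))

lemma norm_sq_le_mul_norm_emb_sub_sq {z : EuclideanSpace ℝ (Fin m ⊕ Fin k)}
    (hz : z ∈ tangentSpaceOfGraph u q) (w : EuclideanSpace ℝ (Fin k)) :
    ‖w‖ ^ 2 ≤ (1 + frobDu u q ^ 2) * ‖emb 0 w - z‖ ^ 2 := by
  obtain ⟨x, rfl⟩ := exists_eq_emb_of_mem_tangentSpaceOfGraph u q hz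
  rw [emb_sub, norm_emb_sq, zero_sub, norm_neg]
  have hD := norm_fderiv_apply_le_frobDu u q x
  have htri : ‖w‖ ≤ ‖w - fderiv ℝ u q x‖ + frobDu u q * ‖x‖ := by
    have := norm_le_norm_sub_add w (fderiv ℝ u q x)
    linarith
  nlinarith [sq_nonneg (frobDu u q * ‖w - fderiv ℝ u q x‖ - ‖x‖), norm_nonneg w]

lemma norm_secondPartial_sq_le (i j : Fin m) :
    ‖secondPartial u q i j‖ ^ 2 ≤ (1 + frobDu u q ^ 2) * ‖sff u q i j‖ ^ 2 := by
  set P := (tangentSpaceOfGraph u q).orthogonalProjectionOnto (emb 0 (secondPartial u q i j))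
  have hsff :
      sff u q i j = emb 0 (secondPartial u q i j) - (P : EuclideanSpace ℝ (Fin m ⊕ Fin k)) := by
    rw [sff, Submodule.orthogonalProjectionOnto_orthogonal]
    rfl
  rw [hsff]
  exact norm_sq_le_mul_norm_emb_sub_sq u q P.2 _

lemma inducedMetric_eq_one_add_gram :
    inducedMetric u q = 1 + gram ℝ fun i => fderiv ℝ u q (EuclideanSpace.single i 1) := by
  ext i j
  simp [inducedMetric, one_apply]

lemma inv_smul_one_le_inducedMetric_inv :
    (1 + frobDu u q ^ 2)⁻¹ • (1 : Matrix (Fin m) (Fin m) ℝ) ≤ (inducedMetric u q)⁻¹ := by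
  rw [inducedMetric_eq_one_add_gram]
  have hG : (1 + gram ℝ fun i => fderiv ℝ u q (EuclideanSpace.single i 1)).PosDef :=
    PosDef.one.add_posSemidef (posSemidef_gram ℝ _)
  refine hG.inv_smul_one_le_inv ?_
  rw [frobDu, Real.sq_sqrt (by positivity), add_smul, one_smul]
  gcongr
  exact gram_le_sum_norm_sq_smul_one _

lemma sffNormSq_eq_sum_kronecker :
    sffNormSq u q = ∑ s : Fin m × Fin m, ∑ t : Fin m × Fin m,
      ((inducedMetric u q)⁻¹ ⊗ₖ (inducedMetric u q)⁻¹) s t *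
        ⟪sff u q s.1 s.2, sff u q t.1 t.2⟫_ℝ := by
  simp only [sffNormSq, Fintype.sum_prod_type, kroneckerMap_apply]

lemma sum_norm_sff_sq_le :
    ∑ s : Fin m × Fin m, ‖sff u q s.1 s.2‖ ^ 2 ≤ (1 + frobDu u q ^ 2) ^ 2 * sffNormSq u q := by
  have hc : 0 < 1 + frobDu u q ^ 2 := by positivity
  have h := mul_sum_norm_sq_le_sum_mul_inner
    (sq_smul_one_le_kronecker_self (inv_nonneg.2 hc.le) (inv_smul_one_le_inducedMetric_inv u q))
    fun s => sff u q s.1 s.2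
  rwa [← sffNormSq_eq_sum_kronecker, inv_pow, inv_mul_le_iff₀ (by positivity)] at h

lemma norm_secondPartial_le (i j : Fin m) :
    ‖secondPartial u q i j‖ ≤ (1 + frobDu u q ^ 2) ^ ((3 : ℝ) / 2) * sffNorm u q := by
  set c := 1 + frobDu u q ^ 2
  have hc : 0 < c := by positivity
  have hsff : ‖sff u q i j‖ ^ 2 ≤ c ^ 2 * sffNormSq u q :=
    (Finset.single_le_sum (f := fun s : Fin m × Fin m => ‖sff u q s.1 s.2‖ ^ 2)
      (fun _ _ => sq_nonneg _) (Finset.mem_univ (i, j))).trans (sum_norm_sff_sq_le u q)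
  have hsq : ‖secondPartial u q i j‖ ^ 2 ≤ c ^ 3 * sffNormSq u q :=
    calc ‖secondPartial u q i j‖ ^ 2 ≤ c * ‖sff u q i j‖ ^ 2 := norm_secondPartial_sq_le u q i j
      _ ≤ c * (c ^ 2 * sffNormSq u q) := by gcongr
      _ = c ^ 3 * sffNormSq u q := by ring
  have hpow : c ^ ((3 : ℝ) / 2) = Real.sqrt (c ^ 3) := by
    rw [Real.sqrt_eq_rpow, ← Real.rpow_natCast, ← Real.rpow_mul hc.le]
    norm_num
  rw [hpow, sffNorm, ← Real.sqrt_mul (by positivity)]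
  exact Real.le_sqrt_of_sq_le hsq

end SecondFundamentalForm

theorem stmt3_general {m k : ℕ}
    (r : ℝ)
    (u : EuclideanSpace ℝ (Fin m) → EuclideanSpace ℝ (Fin k))
    (M : ℝ) (hM : ∀ x ∈ ball (0 : EuclideanSpace ℝ (Fin m)) r, frobDu u x ≤ M)
    (q : EuclideanSpace ℝ (Fin m)) (hq : q ∈ ball (0 : EuclideanSpace ℝ (Fin m)) r)
    (i j : Fin m) :
    ‖secondPartial u q i j‖ ≤ (1 + M ^ 2) ^ ((3 : ℝ) / 2) * sffNorm u q := by
  have hfrob : 0 ≤ frobDu u q := Real.sqrt_nonneg _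
  calc ‖secondPartial u q i j‖ ≤ (1 + frobDu u q ^ 2) ^ ((3 : ℝ) / 2) * sffNorm u q :=
        norm_secondPartial_le u q i j
    _ ≤ (1 + M ^ 2) ^ ((3 : ℝ) / 2) * sffNorm u q := by
        gcongr
        · exact Real.sqrt_nonneg _
        · exact hM q hq

/-- Let `r > 0` and let `u : B_r → ℝ^k` be of class `C²` with
`‖Du‖_{C⁰(B_r)} ≤ M < ∞`. Then for every `q ∈ B_r` and all indices `i, j`,
`|∂_i∂_j u(q)| ≤ (1 + M²)^{3/2} ‖A(q)‖`, where `‖A(q)‖` is the tensorial norm of the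
second fundamental form of the graph of `u` at `q`. -/
theorem stmt3 {m k : ℕ} (hm : 1 ≤ m) (hk : 1 ≤ k)
    (r : ℝ) (hr : 0 < r)
    (u : EuclideanSpace ℝ (Fin m) → EuclideanSpace ℝ (Fin k))
    (hu : ContDiffOn ℝ 2 u (ball 0 r))
    (M : ℝ) (hM : ∀ x ∈ ball (0 : EuclideanSpace ℝ (Fin m)) r, frobDu u x ≤ M)
    (q : EuclideanSpace ℝ (Fin m)) (hq : q ∈ ball (0 : EuclideanSpace ℝ (Fin m)) r)
    (i j : Fin m) :
    ‖secondPartial u q i j‖ ≤ (1 + M ^ 2) ^ ((3 : ℝ) / 2) * sffNorm u q :=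
  stmt3_general r u M hM q hq i j
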